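/- For every integer d ≥ 2: Rat_d^s ∩ I(d) = ∅ if and only if d = 2 or d = 3. -/

import Mathlib

open MvPolynomial Filter Topology
open scoped Classical

noncomputable section

/-- Binary forms: polynomials in `X 0, X 1` over `ℂ`. A pair of homogeneous elements of
degree `d`, not both zero, represents a point of `ℙ^{2d+1}`. -/
abbrev MP : Type := MvPolynomial (Fin 2) ℂ

noncomputable instance : NormalizationMonoid MP :=
  UniqueFactorizationMonoid.strongNormalizationMonoid.toNormalizationMonoid

noncomputable instance : NormalizedGCDMonoid MP :=
  UniqueFactorizationMonoid.toNormalizedGCDMonoid MP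

/-- The complex projective line `ℙ¹(ℂ)`. -/
abbrev P1 : Type := Projectivization ℂ (Fin 2 → ℂ)

/-- A linear form vanishing exactly at the projective point `z`. -/
noncomputable def linForm (z : P1) : MP :=
  C (z.rep 1) * X 0 - C (z.rep 0) * X 1

/-- Multiplicity of `z` as a zero of the binary form `H`. -/
noncomputable def rootMult (H : MP) (z : P1) : ℕ :=
  sSup {k : ℕ | linForm z ^ k ∣ H}

/-- `H_f = gcd(P, Q)` for `f = [P : Q]`. -/
noncomputable def Hgcd (f : MP × MP) : MP := gcd f.1 f.2

/-- The depth `d_z(f)` of `z` as a hole of `f`: multiplicity of `z` as a zero of `H_f`. -/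
noncomputable def depthP (f : MP × MP) (z : P1) : ℕ := rootMult (Hgcd f) z

/-- `z` is a hole of `f`, i.e. a zero of `H_f`. -/
def IsHole (f : MP × MP) (z : P1) : Prop := linForm z ∣ Hgcd f

/-- The induced map `f̂ = [P / H_f : Q / H_f]` as a pair of binary forms. -/
noncomputable def fhat (f : MP × MP) : MP × MP :=
  ((dvd_def.mp (gcd_dvd_left f.1 f.2)).choose,
   (dvd_def.mp (gcd_dvd_right f.1 f.2)).choose)

/-- A pair of binary forms acting as a self-map of `ℙ¹` (junk value `z` where undefined). -/
noncomputable def apply₁ (g : MP × MP) (z : P1) : P1 :=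
  if h : (![eval z.rep g.1, eval z.rep g.2] : Fin 2 → ℂ) ≠ 0 then
    Projectivization.mk ℂ _ h
  else z

/-- The induced map `f̂` as a self-map of `ℙ¹`. -/
noncomputable def fhatFun (f : MP × MP) : P1 → P1 := apply₁ (fhat f)

/-- The induced map of `f` is constant. -/
def ConstHat (f : MP × MP) : Prop := ∃ c : P1, ∀ z : P1, fhatFun f z = c

/-- Local multiplicity `m_z(g)` of the rational map `[g.1 : g.2]` at `z`
(equal to `0` when the map is constant). -/
noncomputable def multAt (g : MP × MP) (z : P1) : ℕ :=
  rootMult (C (eval z.rep g.2) * g.1 - C (eval z.rep g.1) * g.2) z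

/-- Local multiplicity `m_z(f̂)` of the induced map of `f` at `z`. -/
noncomputable def hatMult (f : MP × MP) (z : P1) : ℕ := multAt (fhat f) z

/-- Composition of pairs of binary forms (homogeneous representatives). -/
noncomputable def comp2 (f g : MP × MP) : MP × MP :=
  (aeval ![g.1, g.2] f.1, aeval ![g.1, g.2] f.2)

/-- The iterate `f^n` as a pair of binary forms (canonical homogeneous representative). -/
noncomputable def iterPair (f : MP × MP) : ℕ → MP × MP
  | 0 => (X 0, X 1)
  | n + 1 => comp2 f (iterPair f n)

/-- GIT semistability of a degree-`d` point `f` of `ℙ^{2d+1}`. -/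
def Semistable (d : ℕ) (f : MP × MP) : Prop :=
  (∀ z : P1, (depthP f z : ℚ) ≤ ((d : ℚ) + 1) / 2) ∧
  ∀ h : P1, (d : ℚ) / 2 ≤ (depthP f h : ℚ) → fhatFun f h ≠ h

/-- GIT stability of a degree-`d` point `f` of `ℙ^{2d+1}`. -/
def Stable (d : ℕ) (f : MP × MP) : Prop :=
  (∀ z : P1, (depthP f z : ℚ) ≤ (d : ℚ) / 2) ∧
  ∀ h : P1, ((d : ℚ) - 1) / 2 ≤ (depthP f h : ℚ) → fhatFun f h ≠ h

/-- The indeterminacy locus `I(d)`: the induced map is a constant `c` which is a hole. -/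
def Idet (f : MP × MP) : Prop :=
  ∃ c : P1, (∀ z : P1, fhatFun f z = c) ∧ IsHole f c

/-- The set `U_n` of `n`-unstable maps. -/
def Unstable (d n : ℕ) (f : MP × MP) : Prop :=
  Semistable d f ∧ ¬ Idet f ∧ ¬ Semistable (d ^ n) (iterPair f n)

/-- `f` is a representative of a point of `ℙ^{2d+1}`: a pair of homogeneous binary
forms of degree `d`, not both zero. -/
def IsRatRep (d : ℕ) (f : MP × MP) : Prop :=
  f.1.IsHomogeneous d ∧ f.2.IsHomogeneous d ∧ f ≠ 0

/-- Projective equality of pairs of binary forms. -/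
def ProjEq (f g : MP × MP) : Prop := ∃ c : ℂ, c ≠ 0 ∧ g = (C c * f.1, C c * f.2)

/-- The point `∞ = [1 : 0]` of `ℙ¹`. -/
noncomputable def infty : P1 :=
  Projectivization.mk ℂ ![1, 0] (by
    intro h
    simpa using congrFun h 0)

/-- The point `[a : 1]` of `ℙ¹`. -/
noncomputable def ptc (a : ℂ) : P1 :=
  Projectivization.mk ℂ ![a, 1] (by
    intro h
    simpa using congrFun h 1)

/-- The degree of a pair of binary forms. -/
def pairDeg (g : MP × MP) : ℕ := max g.1.totalDegree g.2.totalDegree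

end

/-! A hole `c` of `f` has depth at least `1`, and `1 ≥ (d - 1) / 2` when `d ≤ 3`; so if `f̂` is
the constant `c`, the fixed point `f̂(c) = c` violates stability. For `d ≥ 4` take `f = [H : 0]`
where `H` vanishes simply at `∞` and to orders `⌊d/2⌋` and `d - 1 - ⌊d/2⌋` at `0` and `1`. Then
`f̂ ≡ ∞`, which is a hole of depth `1 < (d - 1) / 2`, and every depth is at most `d / 2`, so `f`
is stable and lies in `I(d)`. Depths of such products of linear forms are read off from
multiplicities, the linear forms being prime. -/

theorem MvPolynomial.prime_of_isHomogeneous_one {σ K : Type*} [Field K]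
    {p : MvPolynomial σ K} (hp : p.IsHomogeneous 1) (hp0 : p ≠ 0) : Prime p := by
  refine (irreducible_of_totalDegree_eq_one (hp.totalDegree hp0) fun x hx => ?_).prime
  refine isUnit_iff_ne_zero.mpr fun hx0 => hp0 ?_
  ext i
  simpa [hx0] using hx i

theorem eval_linForm (v : Fin 2 → ℂ) (z : P1) :
    eval v (linForm z) = z.rep 1 * v 0 - z.rep 0 * v 1 := by
  simp [linForm]

theorem linForm_isHomogeneous (z : P1) : (linForm z).IsHomogeneous 1 :=
  ((isHomogeneous_X ℂ 0).C_mul _).sub ((isHomogeneous_X ℂ 1).C_mul _)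

theorem linForm_ne_zero (z : P1) : linForm z ≠ 0 := by
  intro h
  have h1 := congrArg (eval ![1, 0]) h
  have h0 := congrArg (eval ![0, 1]) h
  simp only [eval_linForm, map_zero] at h1 h0
  apply z.rep_nonzero
  funext i
  fin_cases i <;> simp_all

theorem prime_linForm (z : P1) : Prime (linForm z) :=
  prime_of_isHomogeneous_one (linForm_isHomogeneous z) (linForm_ne_zero z)

theorem eval_rep_linForm_eq_zero_iff {z w : P1} : eval z.rep (linForm w) = 0 ↔ z = w := by
  have hind := Projectivization.linearIndependent_pair_iff_ne (D := z) (D' := w)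
  rw [← Matrix.of_row ![z.rep, w.rep], Matrix.linearIndependent_rows_iff_isUnit,
    Matrix.isUnit_iff_isUnit_det, Matrix.det_fin_two, isUnit_iff_ne_zero] at hind
  simp only [Matrix.of_apply, Matrix.cons_val_zero, Matrix.cons_val_one] at hind
  rw [eval_linForm, ← not_iff_not, ← ne_eq, ← ne_eq, ← hind, mul_comm (w.rep 1),
    mul_comm (w.rep 0)]

theorem linForm_dvd_iff {z w : P1} : linForm z ∣ linForm w ↔ z = w := by
  refine ⟨fun ⟨q, hq⟩ => eval_rep_linForm_eq_zero_iff.mp ?_, fun h => h ▸ dvd_rfl⟩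
  rw [hq, map_mul, eval_rep_linForm_eq_zero_iff.mpr rfl, zero_mul]

theorem rootMult_eq_multiplicity {H : MP} (hH : H ≠ 0) (z : P1) :
    rootMult H z = multiplicity (linForm z) H := by
  have hfin := FiniteMultiplicity.of_not_isUnit (prime_linForm z).not_isUnit hH
  refine le_antisymm (csSup_le ⟨0, by simp⟩ fun k hk => hfin.le_multiplicity_of_pow_dvd hk) ?_
  exact le_csSup ⟨multiplicity (linForm z) H, fun k hk => hfin.le_multiplicity_of_pow_dvd hk⟩
    (pow_multiplicity_dvd _ _)

theorem Associated.rootMult_eq {H H' : MP} (h : Associated H H') (z : P1) :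
    rootMult H z = rootMult H' z := by
  simp only [rootMult, h.dvd_iff_dvd_right]

noncomputable def formOfPoints (s : Multiset P1) : MP := (s.map linForm).prod

theorem formOfPoints_ne_zero (s : Multiset P1) : formOfPoints s ≠ 0 :=
  Multiset.prod_ne_zero fun h => by
    obtain ⟨z, -, hz⟩ := Multiset.mem_map.mp h
    exact linForm_ne_zero z hz

theorem isHomogeneous_formOfPoints (s : Multiset P1) :
    (formOfPoints s).IsHomogeneous (Multiset.card s) := by
  induction s using Multiset.induction_on with
  | empty => exact isHomogeneous_one _ _
  | cons w s ih =>
    rw [formOfPoints, Multiset.map_cons, Multiset.prod_cons, Multiset.card_cons, add_comm]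
    exact (linForm_isHomogeneous w).mul ih

theorem linForm_dvd_formOfPoints {s : Multiset P1} {z : P1} (hz : z ∈ s) :
    linForm z ∣ formOfPoints s :=
  Multiset.dvd_prod (Multiset.mem_map_of_mem _ hz)

theorem emultiplicity_linForm_formOfPoints (s : Multiset P1) (z : P1) :
    emultiplicity (linForm z) (formOfPoints s) = s.count z := by
  induction s using Multiset.induction_on with
  | empty => simp [formOfPoints, emultiplicity_of_one_right (prime_linForm z).not_isUnit]
  | cons w s ih =>
    rw [formOfPoints, Multiset.map_cons, Multiset.prod_cons, emultiplicity_mul (prime_linForm z),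
      ← formOfPoints, ih, Multiset.count_cons]
    by_cases hzw : z = w
    · subst hzw
      simpa [add_comm] using emultiplicity_pow_self_of_prime (prime_linForm z) 1
    · rw [emultiplicity_eq_zero.mpr (mt linForm_dvd_iff.mp hzw)]
      simp [hzw]

theorem rootMult_formOfPoints (s : Multiset P1) (z : P1) :
    rootMult (formOfPoints s) z = s.count z := by
  rw [rootMult_eq_multiplicity (formOfPoints_ne_zero s)]
  exact multiplicity_eq_of_emultiplicity_eq_some (emultiplicity_linForm_formOfPoints s z)

theorem Hgcd_mul_fhat_fst (f : MP × MP) : Hgcd f * (fhat f).1 = f.1 :=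
  (dvd_def.mp (gcd_dvd_left f.1 f.2)).choose_spec.symm

theorem Hgcd_mul_fhat_snd (f : MP × MP) : Hgcd f * (fhat f).2 = f.2 :=
  (dvd_def.mp (gcd_dvd_right f.1 f.2)).choose_spec.symm

theorem Hgcd_ne_zero {f : MP × MP} (hf : f ≠ 0) : Hgcd f ≠ 0 := fun h =>
  hf (Prod.ext ((gcd_eq_zero_iff _ _).mp h).1 ((gcd_eq_zero_iff _ _).mp h).2)

theorem one_le_depthP {f : MP × MP} {z : P1} (hf : f ≠ 0) (hz : IsHole f z) :
    1 ≤ depthP f z := by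
  rw [depthP, rootMult_eq_multiplicity (Hgcd_ne_zero hf)]
  exact multiplicity_pos_of_dvd hz

theorem Stable.not_idet {d : ℕ} {f : MP × MP} (hst : Stable d f) (hd : d ≤ 3) (hf : f ≠ 0) :
    ¬ Idet f := by
  rintro ⟨c, hconst, hc⟩
  refine hst.2 c ?_ (hconst c)
  have hdepth : (1 : ℚ) ≤ depthP f c := by exact_mod_cast one_le_depthP hf hc
  have hd' : (d : ℚ) ≤ 3 := by exact_mod_cast hd
  linarith

theorem apply₁_eq_infty {g : MP × MP} {z : P1} (h1 : eval z.rep g.1 ≠ 0)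
    (h2 : eval z.rep g.2 = 0) : apply₁ g z = infty := by
  have hv : (![eval z.rep g.1, eval z.rep g.2] : Fin 2 → ℂ) ≠ 0 := fun h => h1 (congrFun h 0)
  rw [apply₁, dif_pos hv, infty, Projectivization.mk_eq_mk_iff']
  refine ⟨eval z.rep g.1, ?_⟩
  funext i
  fin_cases i <;> simp [h2]

theorem Hgcd_pair_zero (H : MP) : Hgcd (H, 0) = normalize H := gcd_zero_right H

theorem depthP_pair_zero (H : MP) (z : P1) : depthP (H, 0) z = rootMult H z := by
  rw [depthP, Hgcd_pair_zero]
  exact (normalize_associated H).rootMult_eq z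

theorem isHole_pair_zero_iff {H : MP} {z : P1} : IsHole (H, 0) z ↔ linForm z ∣ H := by
  rw [IsHole, Hgcd_pair_zero, dvd_normalize_iff]

theorem fhatFun_pair_zero {H : MP} (hH : H ≠ 0) (z : P1) : fhatFun (H, 0) z = infty := by
  have hG : Hgcd (H, 0) ≠ 0 := Hgcd_ne_zero (by simpa using hH)
  have hfst := Hgcd_mul_fhat_fst (H, 0)
  have hsnd := Hgcd_mul_fhat_snd (H, 0)
  rw [Hgcd_pair_zero, normalize_apply, mul_assoc] at hfst
  have hunit : IsUnit (fhat (H, 0)).1 :=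
    IsUnit.of_mul_eq_one_right _ (mul_left_cancel₀ hH (hfst.trans (mul_one H).symm))
  exact apply₁_eq_infty ((hunit.map (eval z.rep)).ne_zero)
    (by rw [(mul_eq_zero.mp hsnd).resolve_left hG, map_zero])

theorem stable_formOfPoints_zero {s : Multiset P1}
    (hcount : ∀ z, 2 * s.count z ≤ Multiset.card s)
    (hinfty : 2 * s.count infty + 1 < Multiset.card s) :
    Stable (Multiset.card s) (formOfPoints s, 0) := by
  refine ⟨fun z => ?_, fun h hh => ?_⟩
  · rw [depthP_pair_zero, rootMult_formOfPoints]
    rw [le_div_iff₀ two_pos]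
    exact_mod_cast (mul_comm _ 2).trans_le (hcount z)
  · rw [fhatFun_pair_zero (formOfPoints_ne_zero s)]
    rintro rfl
    rw [depthP_pair_zero, rootMult_formOfPoints] at hh
    have : (2 * s.count infty + 1 : ℚ) < Multiset.card s := by exact_mod_cast hinfty
    linarith

theorem idet_formOfPoints_zero {s : Multiset P1} (h : infty ∈ s) : Idet (formOfPoints s, 0) :=
  ⟨infty, fhatFun_pair_zero (formOfPoints_ne_zero s),
    isHole_pair_zero_iff.mpr (linForm_dvd_formOfPoints h)⟩

theorem ptc_ne_infty (a : ℂ) : ptc a ≠ infty := by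
  rw [ptc, infty, Ne, Projectivization.mk_eq_mk_iff']
  rintro ⟨c, hc⟩
  simpa using congrFun hc 1

theorem ptc_injective : Function.Injective ptc := by
  intro a b h
  rw [ptc, ptc, Projectivization.mk_eq_mk_iff'] at h
  obtain ⟨c, hc⟩ := h
  have h1 := congrFun hc 1
  have h0 := congrFun hc 0
  simp_all

theorem exists_stable_idet {d : ℕ} (hd : 4 ≤ d) :
    ∃ f : MP × MP, IsRatRep d f ∧ Stable d f ∧ Idet f := by
  set s : Multiset P1 :=
    infty ::ₘ (Multiset.replicate (d / 2) (ptc 0) + Multiset.replicate (d - 1 - d / 2) (ptc 1))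
  have hcard : Multiset.card s = d := by
    simp only [s, Multiset.card_cons, Multiset.card_add, Multiset.card_replicate]
    omega
  have hcount_infty : s.count infty = 1 := by
    simp [s, Multiset.count_replicate, ptc_ne_infty]
  have hcount_zero : s.count (ptc 0) = d / 2 := by
    simp [s, Multiset.count_replicate, ptc_ne_infty, ptc_injective.eq_iff]
  have hcount_one : s.count (ptc 1) = d - 1 - d / 2 := by
    simp [s, Multiset.count_replicate, ptc_ne_infty, ptc_injective.eq_iff]
  have hcount : ∀ z, 2 * s.count z ≤ d := by
    intro z
    by_cases hi : z = infty
    · rw [hi, hcount_infty]; omega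
    by_cases h0 : z = ptc 0
    · rw [h0, hcount_zero]; omega
    by_cases h1 : z = ptc 1
    · rw [h1, hcount_one]; omega
    simp [s, Multiset.count_replicate, Ne.symm h0, Ne.symm h1, hi]
  refine ⟨(formOfPoints s, 0),
    ⟨?_, isHomogeneous_zero _ _ _, by simpa using formOfPoints_ne_zero s⟩,
    ?_, idet_formOfPoints_zero (Multiset.mem_cons_self _ _)⟩
  · exact hcard ▸ isHomogeneous_formOfPoints s
  · rw [← hcard] at hcount hd ⊢
    exact stable_formOfPoints_zero hcount (by omega)

/-- `Rat_d^s ∩ I(d) = ∅` if and only if `d = 2` or `d = 3`. -/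
theorem statement8 (d : ℕ) (hd : 2 ≤ d) :
    (∀ f : MP × MP, IsRatRep d f → ¬ (Stable d f ∧ Idet f)) ↔ d = 2 ∨ d = 3 := by
  constructor
  · intro hnone
    by_contra hd23
    obtain ⟨f, hf, hstable, hidet⟩ := exists_stable_idet (d := d) (by omega)
    exact hnone f hf ⟨hstable, hidet⟩
  · rintro hd23 f hf ⟨hstable, hidet⟩
    exact hstable.not_idet (by omega) hf.2.2 hidet
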